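/- arXiv:2505.19969 — 5 statements merged into one kernel-verified Lean document; each statement's English description precedes it below -/
import Mathlib

section
/- Let (X, 𝒜, ν) be a σ-finite measure space, let p, q : X → [0,∞) be measurable functions, and let P := ν.withDensity p and Q := ν.withDensity q be probability measures (i.e., ∫ p dν = 1 and ∫ q dν = 1). Then for every ε ∈ ℝ and every δ ≥ 0, the following are equivalent: (i) P(O) ≤ e^ε·Q(O) + δ for every measurable set O ⊆ X; (ii) ∫_X max(p(x) − e^ε·q(x), 0) dν(x) ≤ δ. (That is, (ε,δ)-indistinguishability is exactly the hockey-stick divergence H_{e^ε}(P‖Q) = ∫ [p − e^ε q]_+ dν being at most δ.) -/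
open MeasureTheory
open scoped NNReal ENNReal

/-- `(ε, δ)`-indistinguishability of `P = ν.withDensity p` and `Q = ν.withDensity q`
(i.e. `P(O) ≤ e^ε Q(O) + δ` for all measurable `O`) holds if and only if the
hockey-stick divergence `∫ [p − e^ε q]₊ dν` is at most `δ`. -/
theorem indistinguishable_iff_hockeyStick {X : Type*} [MeasurableSpace X]
    (ν : Measure X) [SigmaFinite ν] (p q : X → ℝ≥0)
    (hp : Measurable p) (hq : Measurable q)
    (hP : ∫⁻ x, (p x : ℝ≥0∞) ∂ν = 1) (hQ : ∫⁻ x, (q x : ℝ≥0∞) ∂ν = 1)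
    (ε δ : ℝ) (hδ : 0 ≤ δ) :
    (∀ O : Set X, MeasurableSet O →
        (ν.withDensity fun x => (p x : ℝ≥0∞)) O
          ≤ ENNReal.ofReal (Real.exp ε) * (ν.withDensity fun x => (q x : ℝ≥0∞)) O
            + ENNReal.ofReal δ)
      ↔ ∫⁻ x, ENNReal.ofReal (max ((p x : ℝ) - Real.exp ε * (q x : ℝ)) 0) ∂ν
          ≤ ENNReal.ofReal δ := by
  set c : ℝ≥0∞ := ENNReal.ofReal (Real.exp ε) with hc
  have hcne : c ≠ ∞ := ENNReal.ofReal_ne_top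
  -- rewrite the integrand
  have hint : ∀ x, ENNReal.ofReal (max ((p x : ℝ) - Real.exp ε * (q x : ℝ)) 0)
      = (p x : ℝ≥0∞) - c * (q x : ℝ≥0∞) := by
    intro x
    have h1 : ENNReal.ofReal (max ((p x : ℝ) - Real.exp ε * (q x : ℝ)) 0)
        = ENNReal.ofReal ((p x : ℝ) - Real.exp ε * (q x : ℝ)) := by
      rcases le_total ((p x : ℝ) - Real.exp ε * (q x : ℝ)) 0 with h | h
      · rw [max_eq_right h, ENNReal.ofReal_zero, ENNReal.ofReal_eq_zero.2 h]
      · rw [max_eq_left h]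
    rw [h1, ENNReal.ofReal_sub _ (by positivity), ENNReal.ofReal_mul (Real.exp_nonneg ε)]
    simp [hc]
  simp only [hint]
  have hmp : Measurable fun x => (p x : ℝ≥0∞) := hp.coe_nnreal_ennreal
  have hmq : Measurable fun x => (q x : ℝ≥0∞) := hq.coe_nnreal_ennreal
  constructor
  · intro h
    set O : Set X := {x | c * (q x : ℝ≥0∞) < (p x : ℝ≥0∞)} with hO
    have hOm : MeasurableSet O := measurableSet_lt (hmq.const_mul c) hmp
    have heq : ∫⁻ x, ((p x : ℝ≥0∞) - c * (q x : ℝ≥0∞)) ∂ν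
        = ∫⁻ x in O, ((p x : ℝ≥0∞) - c * (q x : ℝ≥0∞)) ∂ν := by
      rw [← lintegral_indicator hOm]
      refine lintegral_congr fun x => ?_
      by_cases hx : x ∈ O
      · simp [Set.indicator_of_mem hx]
      · have : (p x : ℝ≥0∞) ≤ c * (q x : ℝ≥0∞) := not_lt.1 hx
        simp [Set.indicator_of_notMem hx, tsub_eq_zero_of_le this]
    have hfin : ∫⁻ x in O, c * (q x : ℝ≥0∞) ∂ν ≠ ∞ := by
      rw [lintegral_const_mul _ hmq]
      refine ENNReal.mul_ne_top hcne ?_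
      exact ne_top_of_le_ne_top (by simp [hQ]) (le_trans (setLIntegral_le_lintegral _ _) hQ.le)
    have hsub : ∫⁻ x in O, ((p x : ℝ≥0∞) - c * (q x : ℝ≥0∞)) ∂ν
        = ∫⁻ x in O, (p x : ℝ≥0∞) ∂ν - ∫⁻ x in O, c * (q x : ℝ≥0∞) ∂ν := by
      refine lintegral_sub (hmq.const_mul c) hfin ?_
      refine (ae_restrict_iff' hOm).2 (Filter.Eventually.of_forall fun x hx => (le_of_lt hx))
    rw [heq, hsub, tsub_le_iff_right, add_comm]
    have hO2 := h O hOm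
    rw [withDensity_apply _ hOm, withDensity_apply _ hOm] at hO2
    rw [lintegral_const_mul _ hmq]
    exact hO2

  · intro h O hOm
    have := h
    rw [withDensity_apply _ hOm, withDensity_apply _ hOm]
    calc ∫⁻ x in O, (p x : ℝ≥0∞) ∂ν
        ≤ ∫⁻ x in O, (c * (q x : ℝ≥0∞) + ((p x : ℝ≥0∞) - c * (q x : ℝ≥0∞))) ∂ν := by
          exact lintegral_mono fun x => le_add_tsub
      _ = c * ∫⁻ x in O, (q x : ℝ≥0∞) ∂ν + ∫⁻ x in O, ((p x : ℝ≥0∞) - c * (q x : ℝ≥0∞)) ∂ν := by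
          rw [lintegral_add_left (hmq.const_mul c), lintegral_const_mul _ hmq]
      _ ≤ c * ∫⁻ x in O, (q x : ℝ≥0∞) ∂ν + ENNReal.ofReal δ := by
          gcongr
          exact le_trans (setLIntegral_le_lintegral _ _) h
end

section
/- Let T ≥ 1 be an integer, Δ > 0, σ > 0, and ε ∈ ℝ. Let P be the product probability measure on ℝ^T whose T coordinates are i.i.d. gaussianReal Δ σ², and let Q be the product measure whose coordinates are i.i.d. gaussianReal 0 σ². Set δ(ε) := Φ(−εσ/(√T·Δ) + √T·Δ/(2σ)) − e^ε·Φ(−εσ/(√T·Δ) − √T·Δ/(2σ)). Then for every measurable set O ⊆ ℝ^T, P(O) ≤ e^ε·Q(O) + δ(ε). (This is the non-adaptive T-fold composition guarantee of the Gaussian mechanism with sensitivity Δ and noise scale σ.) -/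
open MeasureTheory ProbabilityTheory

/-- The standard normal cumulative distribution function. -/
noncomputable def stdNormalCDF (x : ℝ) : ℝ := ((gaussianReal 0 1) (Set.Iic x)).toReal

open MeasureTheory ProbabilityTheory Real NNReal ENNReal

lemma integrable_rexp_quadratic {b : ℝ} (hb : 0 < b) (c d : ℝ) :
    Integrable (fun x : ℝ => rexp (-b * x ^ 2 + c * x + d)) := by
  have h : ∀ x : ℝ, -b * x ^ 2 + c * x + d
      = -b * (x - c / (2 * b)) ^ 2 + (d + c ^ 2 / (4 * b)) := by
    intro x; field_simp; ring
  simp_rw [h, Real.exp_add]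
  exact (((integrable_exp_neg_mul_sq hb).comp_sub_right (c / (2 * b)))).mul_const _

lemma integral_rexp_quadratic {b : ℝ} (hb : 0 < b) (c d : ℝ) :
    ∫ x : ℝ, rexp (-b * x ^ 2 + c * x + d)
      = Real.sqrt (π / b) * rexp (d + c ^ 2 / (4 * b)) := by
  have h : ∀ x : ℝ, -b * x ^ 2 + c * x + d
      = -b * (x - c / (2 * b)) ^ 2 + (d + c ^ 2 / (4 * b)) := by
    intro x; field_simp; ring
  simp_rw [h, Real.exp_add, integral_mul_const]
  rw [integral_sub_right_eq_self (fun x : ℝ => rexp (-b * x ^ 2)) (c / (2 * b)),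
    integral_gaussian]

lemma gaussianPDFReal_mul_rep (m₁ m₂ : ℝ) (v₁ v₂ : ℝ≥0) (t : ℝ) (x : ℝ) :
    gaussianPDFReal (m₂ + x) v₂ t * gaussianPDFReal m₁ v₁ x
      = (√(2 * π * (v₂:ℝ)))⁻¹ * (√(2 * π * (v₁:ℝ)))⁻¹ *
        rexp (-(((v₁:ℝ) + v₂) / (2 * v₁ * v₂)) * x ^ 2
          + ((t - m₂) / v₂ + m₁ / v₁) * x
          + (-(t - m₂) ^ 2 / (2 * v₂) + -m₁ ^ 2 / (2 * v₁))) := by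
  rcases eq_or_ne v₁ 0 with rfl | h₁
  · simp [gaussianPDFReal_zero_var]
  rcases eq_or_ne v₂ 0 with rfl | h₂
  · simp [gaussianPDFReal_zero_var]
  have hV₁ : (0:ℝ) < v₁ := by positivity
  have hV₂ : (0:ℝ) < v₂ := by positivity
  simp only [gaussianPDFReal]
  rw [show ((√(2 * π * (v₂:ℝ)))⁻¹ * rexp (-(t - (m₂ + x)) ^ 2 / (2 * v₂))) *
      ((√(2 * π * (v₁:ℝ)))⁻¹ * rexp (-(x - m₁) ^ 2 / (2 * v₁)))
    = (√(2 * π * (v₂:ℝ)))⁻¹ * (√(2 * π * (v₁:ℝ)))⁻¹ *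
      (rexp (-(t - (m₂ + x)) ^ 2 / (2 * v₂)) * rexp (-(x - m₁) ^ 2 / (2 * v₁))) by ring,
    ← Real.exp_add]
  congr 1
  field_simp
  ring

lemma integrable_gaussianPDFReal_mul (m₁ m₂ : ℝ) {v₁ v₂ : ℝ≥0} (h₁ : v₁ ≠ 0) (h₂ : v₂ ≠ 0)
    (t : ℝ) :
    Integrable (fun x : ℝ =>
      gaussianPDFReal (m₂ + x) v₂ t * gaussianPDFReal m₁ v₁ x) := by
  have hV₁ : (0:ℝ) < v₁ := by positivity
  have hV₂ : (0:ℝ) < v₂ := by positivity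
  have hb : 0 < ((v₁:ℝ) + v₂) / (2 * v₁ * v₂) := by positivity
  simp_rw [gaussianPDFReal_mul_rep]
  exact (integrable_rexp_quadratic hb _ _).const_mul _

lemma gaussianPDFReal_conv (m₁ m₂ : ℝ) {v₁ v₂ : ℝ≥0} (h₁ : v₁ ≠ 0) (h₂ : v₂ ≠ 0) (t : ℝ) :
    ∫ x : ℝ, gaussianPDFReal (m₂ + x) v₂ t * gaussianPDFReal m₁ v₁ x
      = gaussianPDFReal (m₁ + m₂) (v₁ + v₂) t := by
  have hV₁ : (0:ℝ) < v₁ := by positivity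
  have hV₂ : (0:ℝ) < v₂ := by positivity
  set V₁ : ℝ := (v₁ : ℝ)
  set V₂ : ℝ := (v₂ : ℝ)
  have hb : 0 < (V₁ + V₂) / (2 * V₁ * V₂) := by positivity
  simp_rw [gaussianPDFReal_mul_rep]
  rw [integral_const_mul, integral_rexp_quadratic hb]
  rw [gaussianPDFReal]
  have harg : (-(t - m₂) ^ 2 / (2 * V₂) + -m₁ ^ 2 / (2 * V₁))
      + ((t - m₂) / V₂ + m₁ / V₁) ^ 2 / (4 * ((V₁ + V₂) / (2 * V₁ * V₂)))
      = -(t - (m₁ + m₂)) ^ 2 / (2 * (V₁ + V₂)) := by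
    field_simp
    ring
  rw [harg]
  have hcoef : (√(2 * π * V₂))⁻¹ * (√(2 * π * V₁))⁻¹ * √(π / ((V₁ + V₂) / (2 * V₁ * V₂)))
      = (√(2 * π * (V₁ + V₂)))⁻¹ := by
    rw [← Real.sqrt_inv, ← Real.sqrt_inv, ← Real.sqrt_mul (by positivity),
      ← Real.sqrt_mul (by positivity), ← Real.sqrt_inv]
    congr 1
    field_simp
  push_cast
  rw [← hcoef]
  ring

lemma gaussianReal_conv (m₁ m₂ : ℝ) {v₁ v₂ : ℝ≥0} (h₁ : v₁ ≠ 0) (h₂ : v₂ ≠ 0) :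
    ((gaussianReal m₁ v₁).prod (gaussianReal m₂ v₂)).map (fun p : ℝ × ℝ => p.1 + p.2)
      = gaussianReal (m₁ + m₂) (v₁ + v₂) := by
  ext s hs
  rw [Measure.map_apply (by fun_prop) hs,
    Measure.prod_apply (measurable_add hs)]
  have h1 : ∀ x : ℝ, (Prod.mk x ⁻¹' ((fun p : ℝ × ℝ => p.1 + p.2) ⁻¹' s))
      = (fun y => x + y) ⁻¹' s := fun x => rfl
  simp_rw [h1]
  have h2 : ∀ x : ℝ, gaussianReal m₂ v₂ ((fun y => x + y) ⁻¹' s)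
      = ∫⁻ t in s, ENNReal.ofReal (gaussianPDFReal (m₂ + x) v₂ t) := by
    intro x
    rw [← Measure.map_apply (by fun_prop) hs, gaussianReal_map_const_add,
      gaussianReal_apply _ h₂]
    rfl
  simp_rw [h2]
  rw [lintegral_lintegral_swap]
  · have h3 : ∀ t : ℝ, ∫⁻ x, ENNReal.ofReal (gaussianPDFReal (m₂ + x) v₂ t)
        ∂(gaussianReal m₁ v₁)
        = ENNReal.ofReal (gaussianPDFReal (m₁ + m₂) (v₁ + v₂) t) := by
      intro t
      have hm : Measurable fun x : ℝ => ENNReal.ofReal (gaussianPDFReal (m₂ + x) v₂ t) := by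
        simp only [gaussianPDFReal]; fun_prop
      rw [gaussianReal_of_var_ne_zero _ h₁,
        lintegral_withDensity_eq_lintegral_mul _ (measurable_gaussianPDF _ _) hm]
      simp only [Pi.mul_apply, gaussianPDF]
      simp_rw [← ENNReal.ofReal_mul (gaussianPDFReal_nonneg _ _ _),
        mul_comm (gaussianPDFReal m₁ v₁ _)]
      rw [← ofReal_integral_eq_lintegral_ofReal (integrable_gaussianPDFReal_mul m₁ m₂ h₁ h₂ t)
        (ae_of_all _ fun x => mul_nonneg (gaussianPDFReal_nonneg _ _ _) (gaussianPDFReal_nonneg _ _ _)),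
        gaussianPDFReal_conv m₁ m₂ h₁ h₂ t]
    simp_rw [h3]
    rw [gaussianReal_apply _ (by simp [h₁]) s]
    rfl
  · simp only [gaussianPDFReal, Function.uncurry]
    fun_prop

lemma gaussianReal_conv' (m₁ m₂ : ℝ) {v₁ v₂ : ℝ≥0} (h₁ : v₁ ≠ 0) :
    ((gaussianReal m₁ v₁).prod (gaussianReal m₂ v₂)).map (fun p : ℝ × ℝ => p.1 + p.2)
      = gaussianReal (m₁ + m₂) (v₁ + v₂) := by
  rcases eq_or_ne v₂ 0 with rfl | h₂
  · rw [gaussianReal_zero_var, Measure.prod_dirac, Measure.map_map (by fun_prop) (by fun_prop)]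
    have : ((fun p : ℝ × ℝ => p.1 + p.2) ∘ fun x : ℝ => (x, m₂)) = fun x : ℝ => x + m₂ := rfl
    rw [this, gaussianReal_map_add_const, add_zero]
  · exact gaussianReal_conv m₁ m₂ h₁ h₂

lemma map_sum_pi_gaussian (m : ℝ) {v : ℝ≥0} (hv : v ≠ 0) (n : ℕ) :
    (Measure.pi fun _ : Fin n => gaussianReal m v).map (fun x => ∑ i, x i)
      = gaussianReal (n * m) ((n : ℝ≥0) * v) := by
  induction n with
  | zero =>
      simp only [Finset.univ_eq_empty, Finset.sum_empty, Nat.cast_zero, zero_mul]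
      rw [show (fun _ : Fin 0 → ℝ => (0:ℝ)) = fun _ => (0:ℝ) from rfl, Measure.map_const]
      simp [gaussianReal_zero_var]
  | succ n ih =>
      have hmp := (measurePreserving_piFinSuccAbove (fun _ : Fin (n+1) => gaussianReal m v) 0)
      have hS : (fun x : Fin (n+1) → ℝ => ∑ i, x i)
          = (((fun p : ℝ × ℝ => p.1 + p.2) ∘ (Prod.map id (fun y : Fin n → ℝ => ∑ i, y i)))
            ∘ (MeasurableEquiv.piFinSuccAbove (fun _ : Fin (n+1) => ℝ) 0)) := by
        ext x
        simp only [Function.comp_apply, MeasurableEquiv.piFinSuccAbove_apply, Prod.map,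
          id_eq]
        rw [Fin.sum_univ_succAbove (fun i => x i) 0]
        rfl
      rw [hS, ← Measure.map_map (by fun_prop) (MeasurableEquiv.measurable _),
        ← Measure.map_map (by fun_prop) (by fun_prop), hmp.map_eq,
        ← Measure.map_prod_map _ _ measurable_id (by fun_prop), Measure.map_id, ih,
        gaussianReal_conv' _ _ hv]
      congr 1
      · push_cast; ring
      · push_cast; ring

lemma lintegral_fin_pi_prod {n : ℕ} (f : Fin n → ℝ → ℝ≥0∞) (hf : ∀ i, Measurable (f i)) :
    ∫⁻ x : Fin n → ℝ, ∏ i, f i (x i) ∂(Measure.pi fun _ => (volume : Measure ℝ))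
      = ∏ i, ∫⁻ t, f i t := by
  induction n with
  | zero => simp
  | succ n ih =>
      have hmp := (measurePreserving_piFinSuccAbove (fun _ : Fin (n+1) => (volume : Measure ℝ)) 0).symm
      rw [← hmp.lintegral_comp (f := fun x => ∏ i, f i (x i))
        (by exact Finset.measurable_prod _ fun i _ => (hf i).comp (measurable_pi_apply i))]
      simp_rw [MeasurableEquiv.piFinSuccAbove_symm_apply, Fin.insertNthEquiv,
        Fin.prod_univ_succ, Fin.insertNth_zero]
      simp only [Fin.zero_succAbove, Equiv.coe_fn_mk, Fin.cons_zero, Fin.cons_succ]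
      simp only [cast_eq]
      rw [lintegral_prod_mul (f := f 0) (g := fun y : Fin n → ℝ => ∏ i, f i.succ (y i))
        (hf 0).aemeasurable
        (Finset.measurable_prod _ fun i _ => (hf _).comp (measurable_pi_apply i)).aemeasurable,
        ih _ (fun i => hf i.succ), ← Fin.prod_univ_succ (fun i => ∫⁻ t, f i t)]

lemma pi_gaussian_eq (n : ℕ) (m : ℝ) {v : ℝ≥0} (hv : v ≠ 0) :
    Measure.pi (fun _ : Fin n => gaussianReal m v)
      = (Measure.pi fun _ : Fin n => (volume : Measure ℝ)).withDensity
          (fun x => ∏ i, gaussianPDF m v (x i)) := by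
  refine Measure.pi_eq fun s hs => ?_
  rw [withDensity_apply _ (MeasurableSet.univ_pi hs),
    ← lintegral_indicator (MeasurableSet.univ_pi hs)]
  have hpoint : ∀ x : Fin n → ℝ,
      (Set.univ.pi s).indicator (fun x => ∏ i, gaussianPDF m v (x i)) x
        = ∏ i, (s i).indicator (gaussianPDF m v) (x i) := by
    intro x
    by_cases hx : x ∈ Set.univ.pi s
    · rw [Set.indicator_of_mem hx]
      exact Finset.prod_congr rfl fun i _ =>
        (Set.indicator_of_mem (hx i (Set.mem_univ i)) _).symm
    · rw [Set.indicator_of_notMem hx]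
      have : ∃ i, x i ∉ s i := by
        by_contra hcon
        push_neg at hcon
        exact hx fun i _ => hcon i
      obtain ⟨i, hi⟩ := this
      exact (Finset.prod_eq_zero (Finset.mem_univ i)
        (by rw [Set.indicator_of_notMem hi])).symm
  simp_rw [hpoint]
  rw [lintegral_fin_pi_prod _ fun i => (measurable_gaussianPDF m v).indicator (hs i)]
  refine Finset.prod_congr rfl fun i _ => ?_
  rw [lintegral_indicator (hs i), ← gaussianReal_apply _ hv]

lemma gaussianReal_map_neg : (gaussianReal 0 1).map (fun x : ℝ => -x) = gaussianReal 0 1 := by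
  have h : (fun x : ℝ => -x) = (fun x : ℝ => (-1) * x) := by funext x; ring
  rw [h, gaussianReal_map_const_mul]
  norm_num

instance : NullSingletonClass (gaussianReal 0 1) :=
  ⟨fun x => (gaussianReal_absolutelyContinuous 0 one_ne_zero) volume_singleton⟩

lemma stdNormal_Ioi (a : ℝ) :
    gaussianReal 0 1 (Set.Ioi a) = ENNReal.ofReal (stdNormalCDF (-a)) := by
  have h1 : gaussianReal 0 1 (Set.Iic (-a)) = gaussianReal 0 1 (Set.Ici a) := by
    conv_lhs => rw [← _root_.gaussianReal_map_neg]
    rw [Measure.map_apply (by fun_prop) measurableSet_Iic]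
    congr 1
    ext x
    simp
  have h2 : gaussianReal 0 1 (Set.Ici a) = gaussianReal 0 1 (Set.Ioi a) :=
    (measure_congr Ioi_ae_eq_Ici).symm
  rw [stdNormalCDF, h1, h2, ENNReal.ofReal_toReal (measure_ne_top _ _)]

lemma gaussianReal_Ioi (M : ℝ) {V : ℝ≥0} (hV : V ≠ 0) (a : ℝ) :
    gaussianReal M V (Set.Ioi a)
      = ENNReal.ofReal (stdNormalCDF ((M - a) / Real.sqrt V)) := by
  have hc : (0:ℝ) < Real.sqrt V := Real.sqrt_pos.mpr (by positivity)
  have hmap : (gaussianReal 0 1).map (fun x : ℝ => Real.sqrt V * x + M)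
      = gaussianReal M V := by
    have h1 : (fun x : ℝ => Real.sqrt V * x + M)
        = (fun y : ℝ => y + M) ∘ (fun x : ℝ => Real.sqrt V * x) := rfl
    rw [h1, ← Measure.map_map (by fun_prop) (by fun_prop), gaussianReal_map_const_mul,
      gaussianReal_map_add_const]
    norm_num
  rw [← hmap, Measure.map_apply (by fun_prop) measurableSet_Ioi]
  have hpre : (fun x : ℝ => Real.sqrt V * x + M) ⁻¹' Set.Ioi a
      = Set.Ioi ((a - M) / Real.sqrt V) := by
    ext x
    simp only [Set.mem_preimage, Set.mem_Ioi]
    rw [div_lt_iff₀ hc]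
    constructor <;> intro h <;> nlinarith
  rw [hpre, stdNormal_Ioi]
  congr 1
  rw [← neg_div, neg_sub]

/-- Non-adaptive `T`-fold composition guarantee of the Gaussian mechanism with sensitivity `Δ`
and noise scale `σ`: for `P = N(Δ, σ²)^{⊗T}` and `Q = N(0, σ²)^{⊗T}`, every measurable
`O ⊆ ℝ^T` satisfies `P(O) ≤ e^ε Q(O) + δ(ε)` with
`δ(ε) = Φ(−εσ/(√T Δ) + √T Δ/(2σ)) − e^ε Φ(−εσ/(√T Δ) − √T Δ/(2σ))`. -/
theorem gaussian_composition (T : ℕ) (hT : 1 ≤ T) (Δ σ ε : ℝ) (hΔ : 0 < Δ) (hσ : 0 < σ) :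
    ∀ O : Set (Fin T → ℝ), MeasurableSet O →
      (Measure.pi fun _ : Fin T => gaussianReal Δ ⟨σ ^ 2, sq_nonneg σ⟩) O
        ≤ ENNReal.ofReal (Real.exp ε) *
            (Measure.pi fun _ : Fin T => gaussianReal 0 ⟨σ ^ 2, sq_nonneg σ⟩) O
          + ENNReal.ofReal
              (stdNormalCDF (-(ε * σ) / (Real.sqrt T * Δ) + Real.sqrt T * Δ / (2 * σ))
                - Real.exp ε *
                  stdNormalCDF (-(ε * σ) / (Real.sqrt T * Δ) - Real.sqrt T * Δ / (2 * σ))) := by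
  intro O hO
  set v : ℝ≥0 := ⟨σ ^ 2, sq_nonneg σ⟩ with hv_def
  have hvR : (v : ℝ) = σ ^ 2 := rfl
  have hv : v ≠ 0 := by
    intro h
    have : (v : ℝ) = 0 := by rw [h]; rfl
    rw [hvR] at this
    exact (pow_ne_zero 2 hσ.ne') this
  set P : Measure (Fin T → ℝ) := Measure.pi fun _ : Fin T => gaussianReal Δ v with hP
  set Q : Measure (Fin T → ℝ) := Measure.pi fun _ : Fin T => gaussianReal 0 v with hQ
  set FR : (Fin T → ℝ) → ℝ := fun x => ∏ i, gaussianPDFReal Δ v (x i) with hFR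
  set GR : (Fin T → ℝ) → ℝ := fun x => ∏ i, gaussianPDFReal 0 v (x i) with hGR
  set S : (Fin T → ℝ) → ℝ := fun x => ∑ i, x i with hS
  have hSmeas : Measurable S := Finset.measurable_sum _ fun i _ => measurable_pi_apply i
  set s₀ : ℝ := ε * σ ^ 2 / Δ + T * Δ / 2 with hs₀
  set A : Set (Fin T → ℝ) := S ⁻¹' Set.Ioi s₀ with hA
  have hAmeas : MeasurableSet A := hSmeas measurableSet_Ioi
  -- ratio identity
  have hsingle : ∀ y : ℝ, gaussianPDFReal Δ v y
      = rexp ((Δ * y - Δ ^ 2 / 2) / σ ^ 2) * gaussianPDFReal 0 v y := by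
    intro y
    simp only [gaussianPDFReal, hvR]
    rw [show rexp ((Δ * y - Δ ^ 2 / 2) / σ ^ 2) *
        ((√(2 * π * σ ^ 2))⁻¹ * rexp (-(y - 0) ^ 2 / (2 * σ ^ 2)))
      = (√(2 * π * σ ^ 2))⁻¹ * (rexp ((Δ * y - Δ ^ 2 / 2) / σ ^ 2)
          * rexp (-(y - 0) ^ 2 / (2 * σ ^ 2))) by ring, ← Real.exp_add]
    congr 1
    field_simp
    ring
  have hratio : ∀ x, FR x = rexp ((Δ * S x - T * Δ ^ 2 / 2) / σ ^ 2) * GR x := by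
    intro x
    rw [hFR]
    simp only
    simp_rw [hsingle]
    rw [Finset.prod_mul_distrib, ← Real.exp_sum]
    congr 2
    rw [← Finset.sum_div]
    congr 1
    rw [Finset.sum_sub_distrib, ← Finset.mul_sum]
    simp only [Finset.sum_const, Finset.card_univ, Fintype.card_fin, nsmul_eq_mul, hS]
    ring
  have hGRpos : ∀ x, 0 ≤ GR x :=
    fun x => Finset.prod_nonneg fun i _ => gaussianPDFReal_nonneg _ _ _
  -- threshold
  have hthresh : ∀ x, x ∈ A ↔ ε < (Δ * S x - T * Δ ^ 2 / 2) / σ ^ 2 := by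
    intro x
    simp only [hA, Set.mem_preimage, Set.mem_Ioi, hs₀]
    have e1 : Δ * (ε * σ ^ 2 / Δ) = ε * σ ^ 2 := by field_simp
    constructor
    · intro h
      rw [lt_div_iff₀ (by positivity : (0:ℝ) < σ ^ 2)]
      nlinarith [mul_lt_mul_of_pos_left h hΔ]
    · intro h
      rw [lt_div_iff₀ (by positivity : (0:ℝ) < σ ^ 2)] at h
      rw [← mul_lt_mul_iff_right₀ hΔ]
      nlinarith
  -- measurability
  have hFRmeas : Measurable FR := Finset.measurable_prod _ fun i _ =>
    (measurable_gaussianPDFReal _ _).comp (measurable_pi_apply i)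
  have hGRmeas : Measurable GR := Finset.measurable_prod _ fun i _ =>
    (measurable_gaussianPDFReal _ _).comp (measurable_pi_apply i)
  set π0 : Measure (Fin T → ℝ) := Measure.pi fun _ : Fin T => (volume : Measure ℝ) with hπ0
  have hPd : P = π0.withDensity fun x => ENNReal.ofReal (FR x) := by
    rw [hP, pi_gaussian_eq T Δ hv]
    congr 1
    funext x
    simp only [gaussianPDF, hFR]
    exact (ENNReal.ofReal_prod_of_nonneg fun i _ => gaussianPDFReal_nonneg _ _ _).symm
  have hQd : Q = π0.withDensity fun x => ENNReal.ofReal (GR x) := by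
    rw [hQ, pi_gaussian_eq T 0 hv]
    congr 1
    funext x
    simp only [gaussianPDF, hGR]
    exact (ENNReal.ofReal_prod_of_nonneg fun i _ => gaussianPDFReal_nonneg _ _ _).symm
  set c : ℝ≥0∞ := ENNReal.ofReal (rexp ε) with hc
  have hcne : c ≠ ⊤ := ENNReal.ofReal_ne_top
  have hsubpt : ∀ x, ENNReal.ofReal (FR x - rexp ε * GR x)
      = ENNReal.ofReal (FR x) - c * ENNReal.ofReal (GR x) := by
    intro x
    rw [hc, ← ENNReal.ofReal_mul (Real.exp_nonneg ε),
      ENNReal.ofReal_sub _ (mul_nonneg (Real.exp_nonneg ε) (hGRpos x))]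
  have hpt : ∀ x, ENNReal.ofReal (FR x)
      ≤ c * ENNReal.ofReal (GR x) + ENNReal.ofReal (FR x - rexp ε * GR x) := by
    intro x
    rw [hsubpt x]
    exact le_add_tsub
  have hQO : ∫⁻ x in O, ENNReal.ofReal (GR x) ∂π0 = Q O := by
    rw [hQd, withDensity_apply _ hO]
  have step1 : P O ≤ c * Q O
      + ∫⁻ x in O, ENNReal.ofReal (FR x - rexp ε * GR x) ∂π0 := by
    rw [hPd, withDensity_apply _ hO, ← hQO]
    calc ∫⁻ x in O, ENNReal.ofReal (FR x) ∂π0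
        ≤ ∫⁻ x in O, (c * ENNReal.ofReal (GR x)
            + ENNReal.ofReal (FR x - rexp ε * GR x)) ∂π0 := lintegral_mono hpt
      _ = c * ∫⁻ x in O, ENNReal.ofReal (GR x) ∂π0
            + ∫⁻ x in O, ENNReal.ofReal (FR x - rexp ε * GR x) ∂π0 := by
          rw [lintegral_add_left (hGRmeas.ennreal_ofReal.const_mul c),
            lintegral_const_mul c hGRmeas.ennreal_ofReal]
  have step2 : ∫⁻ x in O, ENNReal.ofReal (FR x - rexp ε * GR x) ∂π0
      ≤ ∫⁻ x, ENNReal.ofReal (FR x - rexp ε * GR x) ∂π0 := setLIntegral_le_lintegral _ _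
  -- identify the tail integral
  have hHind : (fun x => ENNReal.ofReal (FR x - rexp ε * GR x))
      = A.indicator (fun x => ENNReal.ofReal (FR x - rexp ε * GR x)) := by
    funext x
    by_cases hx : x ∈ A
    · rw [Set.indicator_of_mem hx]
    · rw [Set.indicator_of_notMem hx, ENNReal.ofReal_eq_zero.mpr]
      have hr : (Δ * S x - T * Δ ^ 2 / 2) / σ ^ 2 ≤ ε := not_lt.mp (mt (hthresh x).mpr hx)
      have : FR x ≤ rexp ε * GR x := by
        rw [hratio x]
        exact mul_le_mul_of_nonneg_right (Real.exp_le_exp.mpr hr) (hGRpos x)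
      linarith
  have hbndA : ∀ x ∈ A, c * ENNReal.ofReal (GR x) ≤ ENNReal.ofReal (FR x) := by
    intro x hx
    have hr : ε ≤ (Δ * S x - T * Δ ^ 2 / 2) / σ ^ 2 := ((hthresh x).mp hx).le
    have : rexp ε * GR x ≤ FR x := by
      rw [hratio x]
      exact mul_le_mul_of_nonneg_right (Real.exp_le_exp.mpr hr) (hGRpos x)
    rw [hc, ← ENNReal.ofReal_mul (Real.exp_nonneg ε)]
    exact ENNReal.ofReal_le_ofReal this
  have step3 : ∫⁻ x, ENNReal.ofReal (FR x - rexp ε * GR x) ∂π0 = P A - c * Q A := by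
    rw [hHind, lintegral_indicator hAmeas]
    have : ∫⁻ x in A, ENNReal.ofReal (FR x - rexp ε * GR x) ∂π0
        = ∫⁻ x in A, (ENNReal.ofReal (FR x) - c * ENNReal.ofReal (GR x)) ∂π0 :=
      lintegral_congr fun x => hsubpt x
    rw [this, lintegral_sub (hGRmeas.ennreal_ofReal.const_mul c)]
    · congr 1
      · rw [hPd, withDensity_apply _ hAmeas]
      · rw [lintegral_const_mul c hGRmeas.ennreal_ofReal, hQd, withDensity_apply _ hAmeas]
    · rw [lintegral_const_mul c hGRmeas.ennreal_ofReal]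
      rw [show ∫⁻ x in A, ENNReal.ofReal (GR x) ∂π0 = Q A by
        rw [hQd, withDensity_apply _ hAmeas]]
      exact ENNReal.mul_ne_top hcne (measure_ne_top _ _)
    · exact (ae_restrict_iff' hAmeas).mpr (ae_of_all _ hbndA)
  -- compute P A and Q A
  have hTne : ((T : ℝ≥0)) ≠ 0 := Nat.cast_ne_zero.mpr (by omega)
  have hTv : ((T : ℝ≥0) * v) ≠ 0 := mul_ne_zero hTne hv
  have hsqTv : Real.sqrt (((T : ℝ≥0) * v : ℝ≥0) : ℝ) = Real.sqrt T * σ := by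
    push_cast [hvR]
    rw [Real.sqrt_mul (Nat.cast_nonneg T), Real.sqrt_sq hσ.le]
  have hPA : P A = ENNReal.ofReal (stdNormalCDF ((T * Δ - s₀) / (Real.sqrt T * σ))) := by
    rw [hP, hA, ← Measure.map_apply hSmeas measurableSet_Ioi, hS,
      map_sum_pi_gaussian Δ hv T, gaussianReal_Ioi _ hTv, hsqTv]
  have hQA : Q A = ENNReal.ofReal (stdNormalCDF ((0 - s₀) / (Real.sqrt T * σ))) := by
    rw [hQ, hA, ← Measure.map_apply hSmeas measurableSet_Ioi, hS,
      map_sum_pi_gaussian 0 hv T, gaussianReal_Ioi _ hTv, hsqTv, mul_zero]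
  -- argument identities
  have hst : Real.sqrt T * Real.sqrt T = (T : ℝ) :=
    Real.mul_self_sqrt (Nat.cast_nonneg T)
  have hstpos : (0 : ℝ) < Real.sqrt T := Real.sqrt_pos.mpr (Nat.cast_pos.mpr (by omega))
  have harg1 : ((T : ℝ) * Δ - s₀) / (Real.sqrt T * σ)
      = -(ε * σ) / (Real.sqrt T * Δ) + Real.sqrt T * Δ / (2 * σ) := by
    rw [hs₀]
    field_simp
    linear_combination (-Δ ^ 2) * hst
  have harg2 : ((0 : ℝ) - s₀) / (Real.sqrt T * σ)
      = -(ε * σ) / (Real.sqrt T * Δ) - Real.sqrt T * Δ / (2 * σ) := by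
    rw [hs₀]
    field_simp
    linear_combination (Δ ^ 2) * hst
  -- assemble
  have hfinal : P A - c * Q A
      ≤ ENNReal.ofReal
          (stdNormalCDF (-(ε * σ) / (Real.sqrt T * Δ) + Real.sqrt T * Δ / (2 * σ))
            - rexp ε * stdNormalCDF (-(ε * σ) / (Real.sqrt T * Δ)
                - Real.sqrt T * Δ / (2 * σ))) := by
    rw [hPA, hQA, harg1, harg2, hc, ← ENNReal.ofReal_mul (Real.exp_nonneg ε),
      ← ENNReal.ofReal_sub _ (mul_nonneg (Real.exp_nonneg ε)
        (show (0:ℝ) ≤ stdNormalCDF (-(ε * σ) / (Real.sqrt T * Δ) - Real.sqrt T * Δ / (2 * σ))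
          from ENNReal.toReal_nonneg))]
  calc P O ≤ c * Q O + ∫⁻ x in O, ENNReal.ofReal (FR x - rexp ε * GR x) ∂π0 := step1
    _ ≤ c * Q O + (P A - c * Q A) := add_le_add_right (step3 ▸ step2) _
    _ ≤ c * Q O + _ := add_le_add_right hfinal _
end

section
/- Let Δ > 0, σ > 0, and ε ∈ ℝ. Set δ* := Φ(Δ/(2σ) − εσ/Δ) − e^ε·Φ(−Δ/(2σ) − εσ/Δ) and c := σ²ε/Δ + Δ/2. Then: (i) for every measurable set O ⊆ ℝ, (gaussianReal Δ σ²)(O) − e^ε·(gaussianReal 0 σ²)(O) ≤ δ*; and (ii) equality holds for the set O = [c, ∞), i.e., (gaussianReal Δ σ²)([c,∞)) − e^ε·(gaussianReal 0 σ²)([c,∞)) = δ*. In particular δ* is the exact hockey-stick divergence H_{e^ε}(N(Δ,σ²) ‖ N(0,σ²)), giving the tight (ε, δ)-guarantee of the Gaussian mechanism with sensitivity Δ and noise scale σ. -/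
open MeasureTheory ProbabilityTheory

open Real in
lemma gauss_Ici (m c σ : ℝ) (hσ : 0 < σ) :
    gaussianReal m ⟨σ ^ 2, sq_nonneg σ⟩ (Set.Ici c)
      = gaussianReal 0 1 (Set.Iic ((m - c) / σ)) := by
  have h1 : (gaussianReal 0 1).map (((-σ)) * ·) = gaussianReal 0 ⟨σ ^ 2, sq_nonneg σ⟩ := by
    rw [gaussianReal_map_const_mul]
    congr 1
    · ring
    · ext; simp; rfl
  have h2 : ((gaussianReal 0 (⟨σ ^ 2, sq_nonneg σ⟩ : NNReal)).map (· + m))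
      = gaussianReal m ⟨σ ^ 2, sq_nonneg σ⟩ := by
    have := gaussianReal_map_add_const (μ := 0) (v := ⟨σ ^ 2, sq_nonneg σ⟩) m
    rwa [zero_add] at this
  rw [← h2, ← h1, Measure.map_apply (measurable_add_const m) measurableSet_Ici,
    Measure.map_apply (measurable_const_mul _) (by measurability)]
  congr 1
  ext x
  simp only [Set.mem_preimage, Set.mem_Ici, Set.mem_Iic]
  rw [le_div_iff₀ hσ]
  constructor <;> intro h <;> nlinarith

open Real in
/-- Tight `(ε, δ)`-guarantee of the Gaussian mechanism: `δ* = Φ(Δ/(2σ) − εσ/Δ) − e^ε Φ(−Δ/(2σ) − εσ/Δ)`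
upper bounds `P(O) − e^ε Q(O)` for all measurable `O`, with equality at `O = [c, ∞)` where
`c = σ²ε/Δ + Δ/2`; here `P = N(Δ, σ²)` and `Q = N(0, σ²)`. -/
theorem gaussian_mechanism_tight (Δ σ ε : ℝ) (hΔ : 0 < Δ) (hσ : 0 < σ) :
    (∀ O : Set ℝ, MeasurableSet O →
        ((gaussianReal Δ ⟨σ ^ 2, sq_nonneg σ⟩) O).toReal
            - Real.exp ε * ((gaussianReal 0 ⟨σ ^ 2, sq_nonneg σ⟩) O).toReal
          ≤ stdNormalCDF (Δ / (2 * σ) - ε * σ / Δ)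
            - Real.exp ε * stdNormalCDF (-(Δ / (2 * σ)) - ε * σ / Δ))
    ∧ ((gaussianReal Δ ⟨σ ^ 2, sq_nonneg σ⟩) (Set.Ici (σ ^ 2 * ε / Δ + Δ / 2))).toReal
        - Real.exp ε *
            ((gaussianReal 0 ⟨σ ^ 2, sq_nonneg σ⟩) (Set.Ici (σ ^ 2 * ε / Δ + Δ / 2))).toReal
      = stdNormalCDF (Δ / (2 * σ) - ε * σ / Δ)
        - Real.exp ε * stdNormalCDF (-(Δ / (2 * σ)) - ε * σ / Δ) := by
  set v : NNReal := ⟨σ ^ 2, sq_nonneg σ⟩ with hv_def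
  have hv : v ≠ 0 := fun h => (pow_ne_zero 2 hσ.ne') (congrArg NNReal.toReal h)
  set c := σ ^ 2 * ε / Δ + Δ / 2 with hc_def
  -- the equality part
  have heqP : gaussianReal Δ v (Set.Ici c)
      = gaussianReal 0 1 (Set.Iic (Δ / (2 * σ) - ε * σ / Δ)) := by
    have e : (Δ - c) / σ = Δ / (2 * σ) - ε * σ / Δ := by
      rw [hc_def]; field_simp; ring
    rw [gauss_Ici Δ c σ hσ, e]
  have heqQ : gaussianReal 0 v (Set.Ici c)
      = gaussianReal 0 1 (Set.Iic (-(Δ / (2 * σ)) - ε * σ / Δ)) := by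
    have e : (0 - c) / σ = -(Δ / (2 * σ)) - ε * σ / Δ := by
      rw [hc_def]; field_simp; ring
    rw [gauss_Ici 0 c σ hσ, e]
  have heq : ((gaussianReal Δ v) (Set.Ici c)).toReal
        - Real.exp ε * ((gaussianReal 0 v) (Set.Ici c)).toReal
      = stdNormalCDF (Δ / (2 * σ) - ε * σ / Δ)
        - Real.exp ε * stdNormalCDF (-(Δ / (2 * σ)) - ε * σ / Δ) := by
    rw [heqP, heqQ, stdNormalCDF, stdNormalCDF]
  refine ⟨fun O hO => ?_, heq⟩
  -- the inequality part
  set f : ℝ → ℝ := fun x => gaussianPDFReal Δ v x - Real.exp ε * gaussianPDFReal 0 v x with hf_def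
  have hint : Integrable f :=
    (integrable_gaussianPDFReal Δ v).sub ((integrable_gaussianPDFReal 0 v).const_mul _)
  have hrepr : ∀ S : Set ℝ,
      ((gaussianReal Δ v) S).toReal - Real.exp ε * ((gaussianReal 0 v) S).toReal
        = ∫ x in S, f x := by
    intro S
    rw [gaussianReal_apply_eq_integral Δ hv S, gaussianReal_apply_eq_integral 0 hv S,
      ENNReal.toReal_ofReal (integral_nonneg fun x => gaussianPDFReal_nonneg _ _ _),
      ENNReal.toReal_ofReal (integral_nonneg fun x => gaussianPDFReal_nonneg _ _ _),
      hf_def]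
    rw [integral_sub (integrable_gaussianPDFReal Δ v).restrict
      ((integrable_gaussianPDFReal 0 v).restrict.const_mul _), integral_const_mul]
  -- sign of f
  have h2σ : (0 : ℝ) < 2 * σ ^ 2 := by positivity
  have h2Δ : (0 : ℝ) < 2 * Δ := by positivity
  have hsign : ∀ x : ℝ, 0 ≤ f x ↔ c ≤ x := by
    intro x
    have hA : 0 < (Real.sqrt (2 * π * (σ ^ 2)))⁻¹ := by positivity
    have hkey : f x = (Real.sqrt (2 * π * (σ ^ 2)))⁻¹ *
        (rexp (-(x - Δ) ^ 2 / (2 * σ ^ 2)) - rexp (ε + -(x - 0) ^ 2 / (2 * σ ^ 2))) := by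
      simp only [hf_def, gaussianPDFReal, show (v : ℝ) = σ ^ 2 from rfl, Real.exp_add]
      ring
    have hcform : c = (2 * σ ^ 2 * ε + Δ ^ 2) / (2 * Δ) := by
      rw [hc_def]; field_simp
    have expand : -(x - Δ) ^ 2 / (2 * σ ^ 2) - (ε + -(x - 0) ^ 2 / (2 * σ ^ 2))
        = (x * (2 * Δ) - (2 * σ ^ 2 * ε + Δ ^ 2)) / (2 * σ ^ 2) := by
      field_simp; ring
    rw [hkey, mul_nonneg_iff_of_pos_left hA, sub_nonneg, Real.exp_le_exp, ← sub_nonneg,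
      expand, le_div_iff₀ h2σ, zero_mul, sub_nonneg, hcform, div_le_iff₀ h2Δ]
  have hsign' : ∀ x : ℝ, x ∈ (Set.Ici c)ᶜ → f x ≤ 0 := by
    intro x hx
    simp only [Set.mem_compl_iff, Set.mem_Ici, not_le] at hx
    by_contra h
    exact absurd ((hsign x).mp (le_of_not_ge h)) (not_le.mpr hx)
  -- main chain
  rw [hrepr O, ← heq, hrepr (Set.Ici c)]
  have step1 : ∫ x in O, f x
      = (∫ x in Set.Ici c ∩ O, f x) + ∫ x in (Set.Ici c)ᶜ ∩ O, f x := by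
    rw [← Measure.restrict_restrict measurableSet_Ici,
      ← Measure.restrict_restrict measurableSet_Ici.compl]
    exact (integral_add_compl measurableSet_Ici hint.restrict).symm
  have step2 : ∫ x in (Set.Ici c)ᶜ ∩ O, f x ≤ 0 :=
    setIntegral_nonpos (measurableSet_Ici.compl.inter hO)
      (fun x hx => hsign' x hx.1)
  have step3 : ∫ x in Set.Ici c ∩ O, f x ≤ ∫ x in Set.Ici c, f x :=
    setIntegral_mono_set hint.integrableOn
      (ae_restrict_of_forall_mem measurableSet_Ici fun x hx => (hsign x).mpr hx)
      (HasSubset.Subset.eventuallyLE Set.inter_subset_left)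
  rw [step1]
  linarith
end

section
/- Let σ > 0, let r ≥ 1, and let μ ∈ ℝ^r. Let γ^σ_r be the isotropic Gaussian measure on ℝ^r, let P be its pushforward under the translation z ↦ μ + z, and let Q := γ^σ_r. Then for every α ≥ 0 and every δ ≥ 0, (P, Q) is (α, δ)-close if and only if (gaussianReal ‖μ‖₂ σ², gaussianReal 0 σ²) is (α, δ)-close. (The hockey-stick divergence between N(μ, σ² I_r) and N(0, σ² I_r) equals that between the one-dimensional Gaussians N(‖μ‖₂, σ²) and N(0, σ²).) -/
open MeasureTheory ProbabilityTheory
open scoped ENNReal NNReal Real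

/-- `(P, Q)` is `(α, δ)`-close: `P(O) ≤ α·Q(O) + δ` for every measurable set `O`. -/
def Close {X : Type*} [MeasurableSpace X] (α δ : ℝ) (P Q : Measure X) : Prop :=
  ∀ O : Set X, MeasurableSet O → P O ≤ ENNReal.ofReal α * Q O + ENNReal.ofReal δ

section Aux

variable {X Y : Type*} [MeasurableSpace X] [MeasurableSpace Y] {α δ : ℝ}

lemma close_map {f : X → Y} (hf : Measurable f) {P Q : Measure X} (h : Close α δ P Q) :
    Close α δ (P.map f) (Q.map f) := fun O hO => by
  rw [Measure.map_apply hf hO, Measure.map_apply hf hO]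
  exact h _ (hf hO)

lemma close_map_equiv (e : X ≃ᵐ Y) {P Q : Measure X} :
    Close α δ (P.map e) (Q.map e) ↔ Close α δ P Q := by
  refine ⟨fun h => ?_, close_map e.measurable⟩
  have h2 := close_map e.symm.measurable h
  rwa [MeasurableEquiv.map_symm_map, MeasurableEquiv.map_symm_map] at h2

lemma close_prod_iff {P Q : Measure X} {R : Measure Y}
    [IsProbabilityMeasure P] [IsProbabilityMeasure Q] [IsProbabilityMeasure R] :
    Close α δ (P.prod R) (Q.prod R) ↔ Close α δ P Q := by
  constructor
  · intro h O hO
    have := h (O ×ˢ Set.univ) (hO.prod MeasurableSet.univ)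
    simpa [Measure.prod_prod] using this
  · intro h O hO
    rw [Measure.prod_apply_symm hO, Measure.prod_apply_symm hO]
    calc ∫⁻ y, P ((fun x => (x, y)) ⁻¹' O) ∂ R
        ≤ ∫⁻ y, (ENNReal.ofReal α * Q ((fun x => (x, y)) ⁻¹' O) + ENNReal.ofReal δ) ∂ R :=
          lintegral_mono fun y => h _ (measurable_prodMk_right hO)
      _ = ENNReal.ofReal α * ∫⁻ y, Q ((fun x => (x, y)) ⁻¹' O) ∂ R + ENNReal.ofReal δ := by
          rw [lintegral_add_right _ measurable_const, lintegral_const, measure_univ, mul_one,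
            lintegral_const_mul _ (measurable_measure_prodMk_right hO)]

lemma lintegral_pi_prod {n : ℕ} (μ : Fin n → Measure ℝ) (hμ : ∀ i, SigmaFinite (μ i))
    (f : Fin n → ℝ → ℝ≥0∞) (hf : ∀ i, Measurable (f i)) :
    ∫⁻ x : Fin n → ℝ, ∏ i, f i (x i) ∂(Measure.pi μ) = ∏ i, ∫⁻ t, f i t ∂(μ i) := by
  induction n with
  | zero =>
      haveI := hμ
      simp [Measure.pi_univ]
  | succ n ih =>
      haveI := hμ
      have hmp := (measurePreserving_piFinSuccAbove μ 0).symm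
        (MeasurableEquiv.piFinSuccAbove (fun _ : Fin (n+1) => ℝ) 0)
      rw [hmp.lintegral_map_equiv]
      simp_rw [MeasurableEquiv.piFinSuccAbove_symm_apply, Fin.insertNthEquiv,
        Equiv.coe_fn_mk, Fin.insertNth_zero, Fin.prod_univ_succ, Fin.cons_zero, Fin.cons_succ,
        Fin.zero_succAbove, cast_eq]
      rw [lintegral_prod_mul (f := f 0) (g := fun y : Fin n → ℝ => ∏ i, f i.succ (y i))
        (hf 0).aemeasurable
        ((Finset.measurable_prod Finset.univ fun i _ =>
          (hf i.succ).comp (measurable_pi_apply i)).aemeasurable),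
        ih (fun i => μ i.succ) (fun i => hμ i.succ) (fun i => f i.succ) (fun i => hf i.succ)]

lemma pi_gaussian_eq_withDensity {n : ℕ} {v : ℝ≥0} (hv : v ≠ 0) :
    (Measure.pi fun _ : Fin n => gaussianReal 0 v)
      = (volume : Measure (Fin n → ℝ)).withDensity fun x => ∏ i, gaussianPDF 0 v (x i) := by
  have hmeas : Measurable (gaussianPDF 0 v) := (measurable_gaussianPDFReal 0 v).ennreal_ofReal
  refine Measure.pi_eq (μ := fun _ : Fin n => gaussianReal 0 v) fun s hs => ?_
  rw [withDensity_apply _ (MeasurableSet.univ_pi hs),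
    ← lintegral_indicator (MeasurableSet.univ_pi hs)]
  have hprod : ∀ x : Fin n → ℝ,
      (Set.univ.pi s).indicator (fun x => ∏ i, gaussianPDF 0 v (x i)) x
        = ∏ i, (s i).indicator (gaussianPDF 0 v) (x i) := by
    intro x
    by_cases hx : x ∈ Set.univ.pi s
    · rw [Set.indicator_of_mem hx]
      exact Finset.prod_congr rfl fun i _ =>
        (Set.indicator_of_mem (hx i (Set.mem_univ i)) _).symm
    · rw [Set.indicator_of_notMem hx]
      simp only [Set.mem_pi, Set.mem_univ, forall_true_left, not_forall] at hx
      obtain ⟨i, hi⟩ := hx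
      exact (Finset.prod_eq_zero (Finset.mem_univ i)
        (Set.indicator_of_notMem hi _)).symm
  simp_rw [hprod]
  have key := lintegral_pi_prod (n := n) (fun _ => (volume : Measure ℝ))
    (fun _ => inferInstance) (fun i => (s i).indicator (gaussianPDF 0 v))
    (fun i => hmeas.indicator (hs i))
  rw [volume_pi, key]
  refine Finset.prod_congr rfl fun i _ => ?_
  rw [lintegral_indicator (hs i), gaussianReal_apply _ hv]

lemma prod_gaussianPDF_radial {n : ℕ} (v : ℝ≥0) (x : Fin n → ℝ) :
    ∏ i, gaussianPDF 0 v (x i)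
      = ENNReal.ofReal ((Real.sqrt (2 * Real.pi * v))⁻¹ ^ n
          * Real.exp (-(∑ i, x i ^ 2) / (2 * v))) := by
  simp only [gaussianPDF]
  rw [← ENNReal.ofReal_prod_of_nonneg (fun i _ => gaussianPDFReal_nonneg 0 v (x i))]
  congr 1
  simp only [gaussianPDFReal, sub_zero]
  rw [Finset.prod_mul_distrib, Finset.prod_const, Finset.card_univ, Fintype.card_fin,
    ← Real.exp_sum]
  congr 1
  rw [← Finset.sum_div, ← Finset.sum_neg_distrib]

lemma map_withDensity_equiv (e : X ≃ᵐ Y) (μ : Measure X) {f : Y → ℝ≥0∞} (hf : Measurable f) :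
    (μ.withDensity (f ∘ e)).map e = (μ.map e).withDensity f := by
  ext s hs
  rw [Measure.map_apply e.measurable hs, withDensity_apply _ hs,
    withDensity_apply _ (e.measurable hs), setLIntegral_map hs hf e.measurable]
  rfl

lemma measurable_gaussProd {k : ℕ} (v : ℝ≥0) :
    Measurable fun x : EuclideanSpace ℝ (Fin k) => ∏ i, gaussianPDF 0 v (x i) :=
  Finset.measurable_prod _ fun i _ =>
    ((measurable_gaussianPDFReal 0 v).ennreal_ofReal).comp
      ((measurable_pi_apply i).comp (MeasurableEquiv.toLp 2 (Fin k → ℝ)).symm.measurable)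

lemma sum_sq_eq_norm_sq {k : ℕ} (y : EuclideanSpace ℝ (Fin k)) :
    ∑ i, y i ^ 2 = ‖y‖ ^ 2 := by
  rw [EuclideanSpace.norm_eq, Real.sq_sqrt (by positivity)]
  exact Finset.sum_congr rfl fun i _ => by rw [Real.norm_eq_abs, sq_abs]

lemma map_rot_gauss {k : ℕ} (v : ℝ≥0)
    (L : EuclideanSpace ℝ (Fin k) ≃ₗᵢ[ℝ] EuclideanSpace ℝ (Fin k)) :
    ((volume : Measure (EuclideanSpace ℝ (Fin k))).withDensity
        (fun x => ∏ i, gaussianPDF 0 v (x i))).map (L.toHomeomorph.toMeasurableEquiv)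
      = (volume : Measure (EuclideanSpace ℝ (Fin k))).withDensity
        (fun x => ∏ i, gaussianPDF 0 v (x i)) := by
  set eL : EuclideanSpace ℝ (Fin k) ≃ᵐ EuclideanSpace ℝ (Fin k) :=
    L.toHomeomorph.toMeasurableEquiv with heL
  have hinv : (fun x : EuclideanSpace ℝ (Fin k) => ∏ i, gaussianPDF 0 v (x i)) ∘ eL
      = fun x : EuclideanSpace ℝ (Fin k) => ∏ i, gaussianPDF 0 v (x i) := by
    funext x
    have hLx : (eL x : EuclideanSpace ℝ (Fin k)) = L x := rfl
    have h1 : ∑ i, (L x) i ^ 2 = ∑ i, x i ^ 2 := by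
      rw [sum_sq_eq_norm_sq, sum_sq_eq_norm_sq, L.norm_map]
    rw [Function.comp_apply, hLx, prod_gaussianPDF_radial, prod_gaussianPDF_radial, h1]
  conv_lhs => rw [← hinv]
  have hvol : Measure.map (⇑eL) (volume : Measure (EuclideanSpace ℝ (Fin k))) = volume :=
    (LinearIsometryEquiv.measurePreserving L).map_eq
  rw [map_withDensity_equiv eL volume (measurable_gaussProd v), hvol]

end Aux

/-- The hockey-stick divergence between `N(μ, σ² I_r)` and `N(0, σ² I_r)` equals that between
the one-dimensional Gaussians `N(‖μ‖₂, σ²)` and `N(0, σ²)`: the `(α, δ)`-closeness statements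
are equivalent. -/
theorem shifted_isoGaussian_close_iff (r : ℕ) (hr : 1 ≤ r) (σ : ℝ) (hσ : 0 < σ)
    (μ : Fin r → ℝ) (α δ : ℝ) (hα : 0 ≤ α) (hδ : 0 ≤ δ) :
    Close α δ
        (Measure.map (fun z => μ + z)
          (Measure.pi fun _ : Fin r => gaussianReal 0 ⟨σ ^ 2, sq_nonneg σ⟩))
        (Measure.pi fun _ : Fin r => gaussianReal 0 ⟨σ ^ 2, sq_nonneg σ⟩)
      ↔ Close α δ
          (gaussianReal (Real.sqrt (∑ i, μ i ^ 2)) ⟨σ ^ 2, sq_nonneg σ⟩)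
          (gaussianReal 0 ⟨σ ^ 2, sq_nonneg σ⟩) := by
  obtain ⟨n, rfl⟩ : ∃ n, r = n + 1 := ⟨r - 1, (Nat.succ_pred_eq_of_pos hr).symm⟩
  set v : ℝ≥0 := (⟨σ ^ 2, sq_nonneg σ⟩ : ℝ≥0) with hvdef
  have hv : v ≠ 0 := by
    intro h
    apply pow_ne_zero 2 (ne_of_gt hσ)
    have h2 : (v : ℝ) = 0 := by rw [h]; simp
    exact h2
  set m : ℝ := Real.sqrt (∑ i, μ i ^ 2) with hmdef
  have hm_nonneg : 0 ≤ m := Real.sqrt_nonneg _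
  set γ : Measure (Fin (n + 1) → ℝ) := Measure.pi fun _ => gaussianReal 0 v with hγ
  set ν : Fin (n + 1) → ℝ := fun i => if i = 0 then m else 0 with hν
  have hmble : ∀ c : Fin (n + 1) → ℝ, Measurable fun z : Fin (n + 1) → ℝ => c + z :=
    fun c => measurable_id.const_add c
  have step1 : Close α δ (γ.map (fun z => μ + z)) γ ↔ Close α δ (γ.map (fun z => ν + z)) γ := by
    by_cases hμ0 : μ = 0
    · have hm0 : m = 0 := by simp [hmdef, hμ0]
      have hνμ : ν = μ := by funext i; simp [hν, hm0, hμ0]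
      rw [hνμ]
    · set E := EuclideanSpace ℝ (Fin (n + 1)) with hE
      set e : E ≃ᵐ (Fin (n + 1) → ℝ) := (MeasurableEquiv.toLp 2 (Fin (n + 1) → ℝ)).symm with he
      set γE : Measure E :=
        (volume : Measure E).withDensity (fun x => ∏ i, gaussianPDF 0 v (x i)) with hγE
      have hEadd : ∀ c' : E, Measurable fun z : E => c' + z :=
        fun c' => (continuous_const.add continuous_id).measurable
      have hD : Measurable fun x : Fin (n + 1) → ℝ => ∏ i, gaussianPDF 0 v (x i) :=
        Finset.measurable_prod _ fun i _ =>
          ((measurable_gaussianPDFReal 0 v).ennreal_ofReal).comp (measurable_pi_apply i)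
      have hmapγ : γE.map e = γ := by
        rw [hγ, pi_gaussian_eq_withDensity hv, hγE]
        have hcoe : (fun x : E => ∏ i, gaussianPDF 0 v (x i))
            = (fun x : Fin (n + 1) → ℝ => ∏ i, gaussianPDF 0 v (x i)) ∘ e := rfl
        rw [hcoe, map_withDensity_equiv e volume hD,
          (EuclideanSpace.volume_preserving_symm_measurableEquiv_toLp _).map_eq]
      have hcomm : ∀ c : Fin (n + 1) → ℝ,
          γ.map (fun z => c + z) = (γE.map (fun z : E => e.symm c + z)).map e := by
        intro c
        rw [← hmapγ, Measure.map_map (hmble c) e.measurable,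
          Measure.map_map e.measurable (hEadd _)]
        rfl
      have iff₁ : ∀ c : Fin (n + 1) → ℝ,
          (Close α δ (γ.map (fun z => c + z)) γ
            ↔ Close α δ (γE.map (fun z : E => e.symm c + z)) γE) := by
        intro c
        rw [hcomm c, ← hmapγ]
        exact close_map_equiv e
      -- construct the rotation
      have hm0 : m ≠ 0 := by
        rw [hmdef]
        intro h
        apply hμ0
        have hle : ∑ i, μ i ^ 2 = 0 :=
          le_antisymm (Real.sqrt_eq_zero'.mp h)
            (Finset.sum_nonneg fun i _ => sq_nonneg _)
        funext i
        have hzero := (Finset.sum_eq_zero_iff_of_nonneg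
          (fun i _ => sq_nonneg (μ i))).mp hle i (Finset.mem_univ i)
        exact pow_eq_zero_iff two_ne_zero |>.mp hzero
      have hμ'norm : ‖(e.symm μ : E)‖ = m := by
        rw [EuclideanSpace.norm_eq, hmdef]
        congr 1
        exact Finset.sum_congr rfl fun i _ => by rw [Real.norm_eq_abs, sq_abs]; rfl
      have hu : ‖(m⁻¹ • (e.symm μ) : E)‖ = 1 := by
        rw [norm_smul, norm_inv, Real.norm_eq_abs, abs_of_nonneg hm_nonneg, hμ'norm,
          inv_mul_cancel₀ hm0]
      have horth : Orthonormal ℝ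
          (Set.restrict {(0 : Fin (n + 1))} (fun _ : Fin (n + 1) => (m⁻¹ • (e.symm μ) : E))) :=
        ⟨fun _ => hu, fun {i j} hij => absurd (Subsingleton.elim i j) hij⟩
      obtain ⟨b, hb⟩ := horth.exists_orthonormalBasis_extension_of_card_eq
        (by show Module.finrank ℝ (EuclideanSpace ℝ (Fin (n + 1))) = Fintype.card (Fin (n + 1)); simp)
      have hb0 : b 0 = m⁻¹ • (e.symm μ) := hb 0 rfl
      set L : E ≃ₗᵢ[ℝ] E := b.repr.symm with hL
      set eL : E ≃ᵐ E := L.toHomeomorph.toMeasurableEquiv with heL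
      have hLν : L (e.symm ν) = e.symm μ := by
        have hν' : (e.symm ν : E) = m • EuclideanSpace.single (0 : Fin (n + 1)) (1 : ℝ) := by
          ext i
          show ν i = m • EuclideanSpace.single (0 : Fin (n + 1)) (1 : ℝ) i
          rw [hν]
          by_cases h : i = 0 <;> simp [h, EuclideanSpace.single_apply]
        have hsingle : L (EuclideanSpace.single (0 : Fin (n + 1)) (1 : ℝ)) = b 0 := by
          rw [hL, ← b.repr_self 0, LinearIsometryEquiv.symm_apply_apply]
        rw [hν', L.map_smul, hsingle, hb0, smul_inv_smul₀ hm0]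
      have hLγE : γE.map eL = γE := by rw [hγE]; exact map_rot_gauss v L
      have hrot : γE.map (fun z : E => e.symm μ + z)
          = (γE.map (fun z : E => e.symm ν + z)).map eL := by
        rw [Measure.map_map eL.measurable (hEadd _)]
        have hfun : (⇑eL ∘ fun z : E => e.symm ν + z)
            = (fun z : E => e.symm μ + z) ∘ ⇑eL := by
          funext z
          show L (e.symm ν + z) = e.symm μ + L z
          rw [L.map_add, hLν]
        rw [hfun, ← Measure.map_map (hEadd _) eL.measurable, hLγE]
      have iff₂ : Close α δ (γE.map (fun z : E => e.symm μ + z)) γE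
          ↔ Close α δ (γE.map (fun z : E => e.symm ν + z)) γE := by
        rw [hrot]
        nth_rewrite 2 [← hLγE]
        exact close_map_equiv eL
      exact (iff₁ μ).trans (iff₂.trans (iff₁ ν).symm)
  have step2 : Close α δ (γ.map (fun z => ν + z)) γ
      ↔ Close α δ (gaussianReal m v) (gaussianReal 0 v) := by
    set ψ : (Fin (n + 1) → ℝ) ≃ᵐ ℝ × (Fin n → ℝ) :=
      MeasurableEquiv.piFinSuccAbove (fun _ => ℝ) 0 with hψ
    set γn : Measure (Fin n → ℝ) := Measure.pi fun _ => gaussianReal 0 v with hγn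
    have hψγ : γ.map ψ = (gaussianReal 0 v).prod γn :=
      (measurePreserving_piFinSuccAbove (fun _ : Fin (n + 1) => gaussianReal 0 v) 0).map_eq
    have hcompose : ⇑ψ ∘ (fun z : Fin (n + 1) → ℝ => ν + z)
        = (Prod.map (fun t : ℝ => m + t) (id : (Fin n → ℝ) → Fin n → ℝ)) ∘ ⇑ψ := by
      funext z
      simp only [Function.comp_apply, hψ, MeasurableEquiv.piFinSuccAbove_apply,
        Fin.insertNthEquiv, Equiv.coe_fn_symm_mk, Prod.map]
      refine Prod.ext ?_ ?_
      · show (ν + z) 0 = m + z 0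
        simp [hν]
      · refine funext fun j => ?_
        show (ν + z) ((0 : Fin (n + 1)).succAbove j) = z ((0 : Fin (n + 1)).succAbove j)
        simp [hν, Fin.zero_succAbove, Fin.succ_ne_zero]
    have key : (γ.map (fun z => ν + z)).map ψ = (gaussianReal m v).prod γn := by
      rw [Measure.map_map ψ.measurable (hmble ν), hcompose,
        ← Measure.map_map ((measurable_const_add m).prodMap measurable_id) ψ.measurable,
        hψγ, ← Measure.map_prod_map _ _ (measurable_const_add m) measurable_id,
        Measure.map_id]
      congr 1
      rw [show (fun t : ℝ => m + t) = (fun t : ℝ => t + m) from funext fun t => add_comm m t,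
        gaussianReal_map_add_const m, zero_add]
    calc Close α δ (γ.map (fun z => ν + z)) γ
        ↔ Close α δ ((γ.map (fun z => ν + z)).map ψ) (γ.map ψ) := (close_map_equiv ψ).symm
      _ ↔ Close α δ ((gaussianReal m v).prod γn) ((gaussianReal 0 v).prod γn) := by
            rw [key, hψγ]
      _ ↔ Close α δ (gaussianReal m v) (gaussianReal 0 v) := close_prod_iff
  exact step1.trans step2
end

section
/- Let σ > 0 and let 0 ≤ a ≤ b be reals. Then for every ε ∈ ℝ and every δ ≥ 0: if (gaussianReal b σ², gaussianReal 0 σ²) is (e^ε, δ)-close, then (gaussianReal a σ², gaussianReal 0 σ²) is (e^ε, δ)-close. (The privacy guarantee of the Gaussian mechanism is monotone in the sensitivity: a smaller mean shift yields a smaller hockey-stick divergence against N(0, σ²).) -/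
open MeasureTheory ProbabilityTheory
open Real
open scoped NNReal ENNReal

lemma gaussPDF_conv_real (m : ℝ) (v₁ v₂ : ℝ≥0) (h₁ : v₁ ≠ 0) (h₂ : v₂ ≠ 0) (z : ℝ) :
    ∫ x, gaussianPDFReal m v₁ x * gaussianPDFReal 0 v₂ (z - x)
      = gaussianPDFReal m (v₁ + v₂) z := by
  have hp : (0:ℝ) < v₁ := by exact_mod_cast pos_iff_ne_zero.mpr h₁
  have hq : (0:ℝ) < v₂ := by exact_mod_cast pos_iff_ne_zero.mpr h₂
  set p : ℝ := (v₁ : ℝ)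
  set q : ℝ := (v₂ : ℝ)
  have hS : (0:ℝ) < p + q := by linarith
  have key : ∀ x : ℝ, gaussianPDFReal m v₁ x * gaussianPDFReal 0 v₂ (z - x)
      = ((√(2*π*p))⁻¹ * (√(2*π*q))⁻¹ * rexp (-(z-m)^2/(2*(p+q))))
        * rexp (-((p+q)/(2*p*q)) * (x - (m*q+z*p)/(p+q))^2) := by
    intro x
    simp only [gaussianPDFReal, sub_zero]
    have hE : -(x-m)^2/(2*p) + -(z-x)^2/(2*q)
        = -(z-m)^2/(2*(p+q)) + -((p+q)/(2*p*q)) * (x - (m*q+z*p)/(p+q))^2 := by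
      field_simp
      ring
    calc (√(2*π*p))⁻¹ * rexp (-(x-m)^2/(2*p)) * ((√(2*π*q))⁻¹ * rexp (-(z-x)^2/(2*q)))
        = (√(2*π*p))⁻¹ * (√(2*π*q))⁻¹ * rexp (-(x-m)^2/(2*p) + -(z-x)^2/(2*q)) := by
          rw [Real.exp_add]; ring
      _ = _ := by rw [hE, Real.exp_add]; ring
  simp_rw [key]
  rw [integral_const_mul]
  have hint : ∫ x : ℝ, rexp (-((p+q)/(2*p*q)) * (x - (m*q+z*p)/(p+q))^2)
      = √(π / ((p+q)/(2*p*q))) := by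
    rw [← integral_gaussian]
    exact integral_sub_right_eq_self (fun y => rexp (-((p+q)/(2*p*q)) * y^2)) _
  rw [hint]
  have hconst : (√(2*π*p))⁻¹ * (√(2*π*q))⁻¹ * √(π/((p+q)/(2*p*q))) = (√(2*π*(p+q)))⁻¹ := by
    rw [← Real.sqrt_inv, ← Real.sqrt_inv, ← Real.sqrt_inv,
      ← Real.sqrt_mul (by positivity), ← Real.sqrt_mul (by positivity)]
    congr 1
    field_simp
  have hcast : ((v₁ + v₂ : ℝ≥0) : ℝ) = p + q := by push_cast; rfl
  simp only [gaussianPDFReal, hcast]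
  linear_combination (rexp (-(z-m)^2/(2*(p+q)))) * hconst

lemma gaussPDFReal_flip (v : ℝ≥0) (z x : ℝ) :
    gaussianPDFReal 0 v (z - x) = gaussianPDFReal z v x := by
  simp only [gaussianPDFReal, sub_zero]
  congr 2
  ring

lemma gaussPDF_conv_lintegral (m : ℝ) (v₁ v₂ : ℝ≥0) (h₁ : v₁ ≠ 0) (h₂ : v₂ ≠ 0) (z : ℝ) :
    ∫⁻ x, gaussianPDF m v₁ x * gaussianPDF 0 v₂ (z - x)
      = gaussianPDF m (v₁ + v₂) z := by
  have hInt : Integrable (fun x => gaussianPDFReal m v₁ x * gaussianPDFReal 0 v₂ (z - x)) := by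
    refine Integrable.bdd_mul (c := (√(2*π*(v₁:ℝ)))⁻¹) ?_ ?_ ?_
    · simp_rw [gaussPDFReal_flip]
      exact integrable_gaussianPDFReal z v₂
    · exact (measurable_gaussianPDFReal m v₁).aestronglyMeasurable
    · refine Filter.Eventually.of_forall fun x => ?_
      rw [Real.norm_of_nonneg (gaussianPDFReal_nonneg _ _ _)]
      unfold gaussianPDFReal
      refine mul_le_of_le_one_right (by positivity) (Real.exp_le_one_iff.mpr ?_)
      apply div_nonpos_of_nonpos_of_nonneg (neg_nonpos.mpr (by positivity)) (by positivity)
  simp only [gaussianPDF]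
  simp_rw [← ENNReal.ofReal_mul (gaussianPDFReal_nonneg _ _ _)]
  rw [← ofReal_integral_eq_lintegral_ofReal hInt
      (Filter.Eventually.of_forall fun x =>
        mul_nonneg (gaussianPDFReal_nonneg _ _ _) (gaussianPDFReal_nonneg _ _ _)),
    gaussPDF_conv_real m v₁ v₂ h₁ h₂ z]

lemma gaussianPDF_ne_top (m : ℝ) (v : ℝ≥0) (x : ℝ) : gaussianPDF m v x ≠ ⊤ :=
  ENNReal.ofReal_ne_top

lemma gauss_conv_measure (m : ℝ) (v₁ v₂ : ℝ≥0) :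
    ((gaussianReal m v₁).prod (gaussianReal 0 v₂)).map (fun p : ℝ × ℝ => p.1 + p.2)
      = gaussianReal m (v₁ + v₂) := by
  rcases eq_or_ne v₂ 0 with rfl | h₂
  · rw [gaussianReal_zero_var, Measure.prod_dirac,
      Measure.map_map (by fun_prop) (by fun_prop)]
    simp [Function.comp_def]
  rcases eq_or_ne v₁ 0 with rfl | h₁
  · rw [gaussianReal_zero_var, Measure.dirac_prod,
      Measure.map_map (by fun_prop) (by fun_prop)]
    have : ((fun p : ℝ × ℝ => p.1 + p.2) ∘ Prod.mk m) = (m + ·) := rfl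
    rw [this, gaussianReal_map_const_add]
    norm_num
  have hv : v₁ + v₂ ≠ 0 := by simp [h₁]
  ext s hs
  have hts : MeasurableSet ((fun p : ℝ × ℝ => p.1 + p.2) ⁻¹' s) := hs.preimage (by fun_prop)
  rw [Measure.map_apply (by fun_prop) hs,
    gaussianReal_of_var_ne_zero m h₁, gaussianReal_of_var_ne_zero 0 h₂,
    gaussianReal_of_var_ne_zero m hv,
    Measure.prod_apply hts,
    lintegral_withDensity_eq_lintegral_mul _ (measurable_gaussianPDF m v₁)
      (measurable_measure_prodMk_left hts)]
  have h1 : ∀ x : ℝ,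
      (volume.withDensity (gaussianPDF 0 v₂)) (Prod.mk x ⁻¹' ((fun p : ℝ × ℝ => p.1 + p.2) ⁻¹' s))
        = ∫⁻ z, gaussianPDF 0 v₂ (z - x) * s.indicator 1 z := by
    intro x
    have hsx : MeasurableSet ((fun y => x + y) ⁻¹' s) := hs.preimage (by fun_prop)
    rw [show Prod.mk x ⁻¹' ((fun p : ℝ × ℝ => p.1 + p.2) ⁻¹' s) = (fun y => x + y) ⁻¹' s from rfl,
      withDensity_apply _ hsx, ← lintegral_indicator hsx _]
    have hfun : ∀ y : ℝ, ((fun y => x + y) ⁻¹' s).indicator (gaussianPDF 0 v₂) y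
        = (fun z => gaussianPDF 0 v₂ (z - x) * s.indicator 1 z) (x + y) := by
      intro y
      simp only [Set.indicator_apply, Set.mem_preimage, add_sub_cancel_left, Pi.one_apply]
      by_cases hy : x + y ∈ s <;> simp [hy]
    simp_rw [hfun]
    exact lintegral_add_left_eq_self (fun z => gaussianPDF 0 v₂ (z - x) * s.indicator 1 z) x
  simp_rw [Pi.mul_apply, h1]
  have pull : ∀ (x : ℝ) (g : ℝ → ℝ≥0∞),
      ∫⁻ z, gaussianPDF m v₁ x * g z = gaussianPDF m v₁ x * ∫⁻ z, g z :=
    fun x g => lintegral_const_mul' _ _ (gaussianPDF_ne_top m v₁ x)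
  simp_rw [← pull]
  rw [lintegral_lintegral_swap]
  swap
  · apply Measurable.aemeasurable
    have hmble : Measurable fun p : ℝ × ℝ =>
        gaussianPDF m v₁ p.1 * (gaussianPDF 0 v₂ (p.2 - p.1) * s.indicator 1 p.2) :=
      ((measurable_gaussianPDF m v₁).comp measurable_fst).mul
        (((measurable_gaussianPDF 0 v₂).comp (measurable_snd.sub measurable_fst)).mul
          ((measurable_one.indicator hs).comp measurable_snd))
    exact hmble
  have harr : ∀ z : ℝ, ∫⁻ x, gaussianPDF m v₁ x * (gaussianPDF 0 v₂ (z - x) * s.indicator 1 z)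
      = s.indicator 1 z * ∫⁻ x, gaussianPDF m v₁ x * gaussianPDF 0 v₂ (z - x) := by
    intro z
    rw [← lintegral_const_mul' _ _ (by
      by_cases hz : z ∈ s <;> simp [Set.indicator_apply, hz] : s.indicator (1 : ℝ → ℝ≥0∞) z ≠ ⊤)]
    congr 1 with x
    ring
  simp_rw [harr, gaussPDF_conv_lintegral m v₁ v₂ h₁ h₂]
  rw [withDensity_apply _ hs, ← lintegral_indicator hs _]
  congr 1 with z
  by_cases hz : z ∈ s <;> simp [Set.indicator_apply, hz]

/-- Monotonicity of the Gaussian mechanism's privacy guarantee in the sensitivity. -/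
theorem gaussian_close_mono_sensitivity (σ : ℝ) (hσ : 0 < σ) (a b : ℝ)
    (ha : 0 ≤ a) (hab : a ≤ b) (ε δ : ℝ) (hδ : 0 ≤ δ)
    (h : Close (Real.exp ε) δ
      (gaussianReal b ⟨σ ^ 2, sq_nonneg σ⟩) (gaussianReal 0 ⟨σ ^ 2, sq_nonneg σ⟩)) :
    Close (Real.exp ε) δ
      (gaussianReal a ⟨σ ^ 2, sq_nonneg σ⟩) (gaussianReal 0 ⟨σ ^ 2, sq_nonneg σ⟩) := by
  rcases eq_or_ne b 0 with rfl | hb0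
  · have : a = 0 := le_antisymm hab ha
    subst this
    exact h
  have hb : 0 < b := lt_of_le_of_ne (ha.trans hab) (Ne.symm hb0)
  set V : ℝ≥0 := ⟨σ ^ 2, sq_nonneg σ⟩ with hV
  set c : ℝ := a / b with hc
  have hc0 : 0 ≤ c := div_nonneg ha hb.le
  have hc1 : c ≤ 1 := (div_le_one hb).mpr hab
  have hcb : c * b = a := div_mul_cancel₀ a hb0
  have hv2nn : 0 ≤ σ ^ 2 - c ^ 2 * σ ^ 2 := by
    have h1 : 0 ≤ 1 - c ^ 2 := by nlinarith
    have := mul_nonneg h1 (sq_nonneg σ)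
    nlinarith
  set v₁ : ℝ≥0 := ⟨c ^ 2 * σ ^ 2, by positivity⟩ with hv₁
  set v₂ : ℝ≥0 := ⟨σ ^ 2 - c ^ 2 * σ ^ 2, hv2nn⟩ with hv₂
  have hsum : v₁ + v₂ = V := by
    ext
    push_cast
    exact (show c ^ 2 * σ ^ 2 + (σ ^ 2 - c ^ 2 * σ ^ 2) = σ ^ 2 by ring)
  have hmul : (NNReal.mk (c ^ 2) (sq_nonneg c) * V : ℝ≥0) = v₁ := by
    ext
    rfl
  have hmapb : (gaussianReal b V).map (c * ·) = gaussianReal a v₁ := by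
    rw [gaussianReal_map_const_mul, hcb, hmul]
  have hmap0 : (gaussianReal 0 V).map (c * ·) = gaussianReal 0 v₁ := by
    rw [gaussianReal_map_const_mul, mul_zero, hmul]
  have hPa : gaussianReal a V
      = ((gaussianReal a v₁).prod (gaussianReal 0 v₂)).map (fun p : ℝ × ℝ => p.1 + p.2) := by
    rw [gauss_conv_measure, hsum]
  have hQ : gaussianReal 0 V
      = ((gaussianReal 0 v₁).prod (gaussianReal 0 v₂)).map (fun p : ℝ × ℝ => p.1 + p.2) := by
    rw [gauss_conv_measure, hsum]
  intro O hO
  have htO : MeasurableSet ((fun p : ℝ × ℝ => p.1 + p.2) ⁻¹' O) := hO.preimage (by fun_prop)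
  have hOy : ∀ y : ℝ, MeasurableSet ((fun x : ℝ => x + y) ⁻¹' O) :=
    fun y => hO.preimage (by fun_prop)
  have hOcy : ∀ y : ℝ, MeasurableSet ((fun t : ℝ => c * t + y) ⁻¹' O) :=
    fun y => hO.preimage (by fun_prop)
  have hPaO : gaussianReal a V O
      = ∫⁻ y, gaussianReal a v₁ ((fun x => x + y) ⁻¹' O) ∂(gaussianReal 0 v₂) := by
    rw [hPa, Measure.map_apply (by fun_prop) hO, Measure.prod_apply_symm htO]
    rfl
  have hQO : gaussianReal 0 V O
      = ∫⁻ y, gaussianReal 0 v₁ ((fun x => x + y) ⁻¹' O) ∂(gaussianReal 0 v₂) := by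
    rw [hQ, Measure.map_apply (by fun_prop) hO, Measure.prod_apply_symm htO]
    rfl
  have key : ∀ y : ℝ, gaussianReal a v₁ ((fun x => x + y) ⁻¹' O)
      ≤ ENNReal.ofReal (Real.exp ε) * gaussianReal 0 v₁ ((fun x => x + y) ⁻¹' O)
        + ENNReal.ofReal δ := by
    intro y
    rw [← hmapb, ← hmap0, Measure.map_apply (by fun_prop) (hOy y),
      Measure.map_apply (by fun_prop) (hOy y)]
    exact h _ (hOcy y)
  rw [hPaO, hQO]
  have hmble : Measurable fun y : ℝ => gaussianReal 0 v₁ ((fun x => x + y) ⁻¹' O) :=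
    measurable_measure_prodMk_right htO
  calc ∫⁻ y, gaussianReal a v₁ ((fun x => x + y) ⁻¹' O) ∂(gaussianReal 0 v₂)
      ≤ ∫⁻ y, (ENNReal.ofReal (Real.exp ε) * gaussianReal 0 v₁ ((fun x => x + y) ⁻¹' O)
          + ENNReal.ofReal δ) ∂(gaussianReal 0 v₂) := lintegral_mono key
    _ = ENNReal.ofReal (Real.exp ε)
          * ∫⁻ y, gaussianReal 0 v₁ ((fun x => x + y) ⁻¹' O) ∂(gaussianReal 0 v₂)
          + ENNReal.ofReal δ := by
        rw [lintegral_add_right _ measurable_const, lintegral_const_mul _ hmble,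
          lintegral_const, measure_univ, mul_one]
end
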